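/- For a concurrent game structure G with safe set F ⊆ S, for each integer k ≥ |Moves| define z^k(s) = max over k-uniform memoryless player-1 strategies σ₁ of inf_{σ₂} Pr_s^{σ₁,σ₂}(Safe(F)) (the maximum is attained since there are finitely many k-uniform selectors). Then for all k, z^k(s) ≤ z^{k+1}(s) for every state s, and lim_{k→∞} z^k(s) = ⟨1⟩val(Safe(F))(s) for every state s. -/

import Mathlib

open scoped Classical

/-- A (two-player) concurrent game structure: a finite state space `S`, a finite
set `M` of moves, move assignments `Γ₁ Γ₂ : S → Finset M`, and a probabilistic
transition function `δ`. -/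
structure CGame (S : Type) (M : Type) where
  Γ₁ : S → Finset M
  Γ₂ : S → Finset M
  δ : S → M → M → S → ℝ

namespace CGame

variable {S M : Type} [Fintype S] [DecidableEq S] [Fintype M] [DecidableEq M]

/-- Well-formedness of a concurrent game structure: move sets are nonempty and
`δ s a b` is a probability distribution over states. -/
def IsGame (G : CGame S M) : Prop :=
  (∀ s, (G.Γ₁ s).Nonempty) ∧ (∀ s, (G.Γ₂ s).Nonempty) ∧
    (∀ s a b t, 0 ≤ G.δ s a b t) ∧ (∀ s a b, (∑ t, G.δ s a b t) = 1)

/-- `x : M → ℝ` is a probability distribution supported on `A`. -/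
def IsDistOn (A : Finset M) (x : M → ℝ) : Prop :=
  (∀ a, 0 ≤ x a) ∧ (∀ a, x a ≠ 0 → a ∈ A) ∧ (∑ a, x a) = 1

/-- A selector for player 1. -/
def IsSel1 (G : CGame S M) (ξ : S → M → ℝ) : Prop := ∀ s, IsDistOn (G.Γ₁ s) (ξ s)

/-- A selector for player 2. -/
def IsSel2 (G : CGame S M) (ξ : S → M → ℝ) : Prop := ∀ s, IsDistOn (G.Γ₂ s) (ξ s)

/-- A strategy for player 1: maps a history (past states `w` and current state `s`)
to a distribution over the moves available at `s`. -/
def IsStrat1 (G : CGame S M) (σ : List S → S → M → ℝ) : Prop :=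
  ∀ w s, IsDistOn (G.Γ₁ s) (σ w s)

/-- A strategy for player 2. -/
def IsStrat2 (G : CGame S M) (σ : List S → S → M → ℝ) : Prop :=
  ∀ w s, IsDistOn (G.Γ₂ s) (σ w s)

/-- The memoryless strategy induced by a selector. -/
def ml (ξ : S → M → ℝ) : List S → S → M → ℝ := fun _ s => ξ s

/-- The pure (Dirac) distribution on a move `b`. -/
def pureDist (b : M) : M → ℝ := fun b' => if b' = b then 1 else 0

/-- The player-1 selector choosing all available moves uniformly at random. -/
noncomputable def uniformSel (G : CGame S M) : S → M → ℝ :=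
  fun s a => if a ∈ G.Γ₁ s then (1 : ℝ) / (G.Γ₁ s).card else 0

/-- Probability of reaching `T` within `n` steps, starting from history `w`
and current state `s`, under strategies `σ₁, σ₂`. -/
noncomputable def reachW (G : CGame S M) (σ₁ σ₂ : List S → S → M → ℝ) (T : Set S) :
    ℕ → List S → S → ℝ
  | 0, _, s => if s ∈ T then 1 else 0
  | n + 1, w, s =>
      if s ∈ T then 1
      else ∑ a : M, ∑ b : M, ∑ t : S,
        σ₁ w s a * σ₂ w s b * G.δ s a b t * reachW G σ₁ σ₂ T n (w ++ [s]) t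

/-- Probability of staying in `F` for `n` steps, starting from history `w`
and current state `s`, under strategies `σ₁, σ₂`. -/
noncomputable def safeW (G : CGame S M) (σ₁ σ₂ : List S → S → M → ℝ) (F : Set S) :
    ℕ → List S → S → ℝ
  | 0, _, s => if s ∈ F then 1 else 0
  | n + 1, w, s =>
      if s ∈ F then
        ∑ a : M, ∑ b : M, ∑ t : S,
          σ₁ w s a * σ₂ w s b * G.δ s a b t * safeW G σ₁ σ₂ F n (w ++ [s]) t
      else 0

/-- `Pr_s^{σ₁,σ₂}(Reach T)`: probability of eventually reaching `T` from `s`. -/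
noncomputable def prReach (G : CGame S M) (σ₁ σ₂ : List S → S → M → ℝ) (T : Set S)
    (s : S) : ℝ :=
  ⨆ n : ℕ, reachW G σ₁ σ₂ T n [] s

/-- `Pr_s^{σ₁,σ₂}(Safe F)`: probability that the play stays in `F` forever. -/
noncomputable def prSafe (G : CGame S M) (σ₁ σ₂ : List S → S → M → ℝ) (F : Set S)
    (s : S) : ℝ :=
  ⨅ n : ℕ, safeW G σ₁ σ₂ F n [] s

/-- `⟨1⟩val^{σ₁}(Reach T)(s) = inf_{σ₂} Pr_s^{σ₁,σ₂}(Reach T)`. -/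
noncomputable def valReachUnder (G : CGame S M) (σ₁ : List S → S → M → ℝ) (T : Set S)
    (s : S) : ℝ :=
  ⨅ σ₂ : {σ // IsStrat2 G σ}, prReach G σ₁ σ₂.1 T s

/-- `⟨1⟩val(Reach T)(s) = sup_{σ₁} inf_{σ₂} Pr_s^{σ₁,σ₂}(Reach T)`. -/
noncomputable def valReach (G : CGame S M) (T : Set S) (s : S) : ℝ :=
  ⨆ σ₁ : {σ // IsStrat1 G σ}, valReachUnder G σ₁.1 T s

/-- `⟨1⟩val^{σ₁}(Safe F)(s) = inf_{σ₂} Pr_s^{σ₁,σ₂}(Safe F)`. -/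
noncomputable def valSafeUnder (G : CGame S M) (σ₁ : List S → S → M → ℝ) (F : Set S)
    (s : S) : ℝ :=
  ⨅ σ₂ : {σ // IsStrat2 G σ}, prSafe G σ₁ σ₂.1 F s

/-- `⟨1⟩val(Safe F)(s) = sup_{σ₁} inf_{σ₂} Pr_s^{σ₁,σ₂}(Safe F)`. -/
noncomputable def valSafe (G : CGame S M) (F : Set S) (s : S) : ℝ :=
  ⨆ σ₁ : {σ // IsStrat1 G σ}, valSafeUnder G σ₁.1 F s

/-- `W₂ = {s | ⟨1⟩val(Reach T)(s) = 0}`. -/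
noncomputable def W2 (G : CGame S M) (T : Set S) : Set S := {s | valReach G T s = 0}

/-- `W₁ = {s | ⟨1⟩val(Safe F)(s) = 1}`. -/
noncomputable def W1 (G : CGame S M) (F : Set S) : Set S := {s | valSafe G F s = 1}

/-- A state is absorbing if for all moves the successor is the state itself. -/
def Absorbing (G : CGame S M) (s : S) : Prop := ∀ a b, G.δ s a b s = 1

/-- A player-1 strategy is proper if against every player-2 strategy, from every
state the set `T ∪ W₂` is reached with probability 1. -/
noncomputable def Proper (G : CGame S M) (T : Set S) (σ₁ : List S → S → M → ℝ) : Prop :=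
  ∀ σ₂, IsStrat2 G σ₂ → ∀ s, prReach G σ₁ σ₂ (T ∪ W2 G T) s = 1

/-- `Pre_{ξ₁,ξ₂}(v)(s)`: one-step expectation of `v` at `s` when the players use the
one-state selectors `x, y`. -/
noncomputable def preSS (G : CGame S M) (v : S → ℝ) (s : S) (x y : M → ℝ) : ℝ :=
  ∑ a : M, ∑ b : M, ∑ t : S, v t * G.δ s a b t * x a * y b

/-- `Pre_{1:ξ₁}(v)(s) = inf_{ξ₂} Pre_{ξ₁,ξ₂}(v)(s)`. -/
noncomputable def pre1Sel (G : CGame S M) (v : S → ℝ) (s : S) (x : M → ℝ) : ℝ :=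
  ⨅ y : {y : M → ℝ // IsDistOn (G.Γ₂ s) y}, preSS G v s x y.1

/-- `Pre₁(v)(s) = sup_{ξ₁} inf_{ξ₂} Pre_{ξ₁,ξ₂}(v)(s)`. -/
noncomputable def pre1 (G : CGame S M) (v : S → ℝ) (s : S) : ℝ :=
  ⨆ x : {x : M → ℝ // IsDistOn (G.Γ₁ s) x}, pre1Sel G v s x.1

/-- The value-iteration sequence: `u 0 = [T]`, `u (k+1) = Pre₁ (u k)`. -/
noncomputable def valIter (G : CGame S M) (T : Set S) : ℕ → S → ℝ
  | 0 => fun s => if s ∈ T then 1 else 0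
  | n + 1 => fun s => pre1 G (valIter G T n) s

/-- The entry time `ℓ_k(s) = min {j ≤ k | u_j(s) = u_k(s)}`. -/
noncomputable def entryTime (G : CGame S M) (T : Set S) (k : ℕ) (s : S) : ℕ :=
  sInf {j : ℕ | valIter G T j s = valIter G T k s}

/-- `dest(s,b)` under a player-1 selector `η`: possible successors of `s` when
player 1 plays `η` and player 2 plays `b`. -/
def destSet (G : CGame S M) (η : S → M → ℝ) (s : S) (b : M) : Set S :=
  {t | ∃ a, η s a ≠ 0 ∧ G.δ s a b t ≠ 0}

/-- `OptSel(v,s)`: the set of optimal one-state player-1 selectors for `v` at `s`. -/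
noncomputable def OptSel (G : CGame S M) (v : S → ℝ) (s : S) : Set (M → ℝ) :=
  {x | IsDistOn (G.Γ₁ s) x ∧ pre1Sel G v s x = pre1 G v s}

/-- `CountOpt(v,s,x)`: the set of counter-optimal player-2 moves against `x`. -/
noncomputable def countOpt (G : CGame S M) (v : S → ℝ) (s : S) (x : M → ℝ) : Finset M :=
  (G.Γ₂ s).filter fun b => preSS G v s x (pureDist b) = pre1 G v s

/-- The support of a one-state selector, as a `Finset`. -/
noncomputable def fsupp (x : M → ℝ) : Finset M := Finset.univ.filter fun a => x a ≠ 0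

/-- `OptSelCount(v,s)`: pairs `(A,B)` such that some optimal selector has support `A`
and counter-optimal action set `B`. -/
noncomputable def optSelCount (G : CGame S M) (v : S → ℝ) (s : S) :
    Set (Finset M × Finset M) :=
  {p | ∃ x ∈ OptSel G v s, fsupp x = p.1 ∧ countOpt G v s x = p.2}

/-- A selector is `k`-uniform if every probability it assigns is of the form `i/j`
with `0 ≤ i ≤ j ≤ k`. -/
def KUniform (k : ℕ) (ξ : S → M → ℝ) : Prop :=
  ∀ s a, ∃ i j : ℕ, i ≤ j ∧ j ≤ k ∧ ξ s a = (i : ℝ) / (j : ℝ)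

end CGame

/-- The best value guaranteed at `s` by a `k`-uniform memoryless player-1
strategy for the safety objective `Safe F` (the supremum is attained since there
are only finitely many `k`-uniform selectors). -/
noncomputable def CGame.zk {S M : Type} [Fintype S] [DecidableEq S]
    [Fintype M] [DecidableEq M] (G : CGame S M) (F : Set S) (k : ℕ) (s : S) : ℝ :=
  sSup {x | ∃ ξ : S → M → ℝ, CGame.IsSel1 G ξ ∧ CGame.KUniform k ξ ∧
    x = CGame.valSafeUnder G (CGame.ml ξ) F s}


/-!
Write `v` for the limit of safety value iteration `v₀ = [F]`, `vₙ₊₁ = [F] · Pre₁(vₙ)`. Against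
any player-1 strategy, player 2 can answer greedily with respect to the iterate that matches the
number of remaining rounds, so `⟨1⟩val(Safe F) ≤ v`. Conversely `v ≤ Pre₁(v)` on `F`, and a
selector `ξ` attaining `Pre₁(v)` keeps `v` sub-invariant, hence guarantees `v`.

A `k`-uniform rounding of `ξ` keeps its support and loses at most a factor `1 - κ` of each
probability, where `κ → 0` as `k → ∞`. The loss is absorbed by the potential `v + l (v² - 1)`:
a step that stays inside a level set of `v` loses nothing, and a step that can leave it spreads
`v` with a variance bounded below uniformly (by the least positive probabilities of `ξ` and `δ`
and the least gap between values of `v`), which the quadratic term turns into a gain of order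
`l`. So for large `k` some `k`-uniform selector guarantees `v - l`. Monotonicity in `k` holds
because `k`-uniform selectors are `(k + 1)`-uniform.
-/

open Finset Filter Topology

section WeightedSum

variable {ι : Type*} [Fintype ι] {q : ι → ℝ}

theorem sum_mul_add_const_of_mem_stdSimplex (hq : q ∈ stdSimplex ℝ ι) (f : ι → ℝ) (c : ℝ) :
    ∑ i, q i * (f i + c) = ∑ i, q i * f i + c := by
  simp only [mul_add, sum_add_distrib, ← sum_mul, hq.2, one_mul]

theorem sum_mul_le_of_mem_stdSimplex (hq : q ∈ stdSimplex ℝ ι) {f : ι → ℝ} {c : ℝ}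
    (h : ∀ i, q i ≠ 0 → f i ≤ c) : ∑ i, q i * f i ≤ c :=
  calc ∑ i, q i * f i ≤ ∑ i, q i * c := sum_le_sum fun i _ => by
        rcases eq_or_ne (q i) 0 with hi | hi
        · simp [hi]
        · exact mul_le_mul_of_nonneg_left (h i hi) (hq.1 i)
    _ = c := by rw [← sum_mul, hq.2, one_mul]

theorem le_sum_mul_of_mem_stdSimplex (hq : q ∈ stdSimplex ℝ ι) {f : ι → ℝ} {c : ℝ}
    (h : ∀ i, q i ≠ 0 → c ≤ f i) : c ≤ ∑ i, q i * f i := by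
  have := sum_mul_le_of_mem_stdSimplex hq (f := fun i => -f i) (c := -c)
    fun i hi => neg_le_neg (h i hi)
  simp only [mul_neg, sum_neg_distrib] at this
  linarith

theorem exists_pos_forall_ne_zero_le {f : ι → ℝ} (hf : ∀ i, 0 ≤ f i) :
    ∃ m > 0, ∀ i, f i ≠ 0 → m ≤ f i := by
  classical
  set T := insert 1 ((univ.filter fun i => f i ≠ 0).image f)
  have hT : T.Nonempty := insert_nonempty _ _
  refine ⟨T.min' hT, (lt_min'_iff T hT).2 fun y hy => ?_, fun i hi =>
    T.min'_le _ (mem_insert_of_mem (mem_image_of_mem _ (by simp [hi])))⟩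
  rcases mem_insert.1 hy with rfl | hy
  · exact one_pos
  · obtain ⟨i, hi, rfl⟩ := mem_image.1 hy
    exact (hf i).lt_of_ne' (mem_filter.1 hi).2

end WeightedSum

def perturb (l r : ℝ) : ℝ := r + l * (r ^ 2 - 1)

theorem perturb_le_self {l r : ℝ} (hl : 0 ≤ l) (hr : r ∈ Set.Icc 0 1) : perturb l r ≤ r := by
  unfold perturb
  nlinarith [mul_nonneg hl (mul_nonneg hr.1 (sub_nonneg.2 hr.2))]

theorem sub_le_perturb {l : ℝ} (hl : 0 ≤ l) (r : ℝ) : r - l ≤ perturb l r := by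
  unfold perturb
  nlinarith [mul_nonneg hl (sq_nonneg r)]

theorem le_sum_mul_perturb {ι : Type*} [Fintype ι] {q : ι → ℝ} (hq : q ∈ stdSimplex ℝ ι)
    {v : ι → ℝ} {c l κ β : ℝ} (hc₀ : 0 ≤ c) (hc₁ : c ≤ 1) (hl : 0 ≤ l) (hκ : 0 ≤ κ)
    (hmean : c - κ ≤ ∑ i, q i * v i) (hspread : β ≤ ∑ i, q i * (v i - c) ^ 2)
    (hβ : κ * (1 + 2 * l) ≤ l * β) :
    perturb l c ≤ ∑ i, q i * perturb l (v i) := by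
  have hexpand : ∀ i, q i * perturb l (v i) = l * (q i * (v i - c) ^ 2) +
      (1 + 2 * l * c) * (q i * v i) + (perturb l c - (1 + 2 * l * c) * c) * q i := fun i => by
    unfold perturb; ring
  rw [sum_congr rfl fun i _ => hexpand i, sum_add_distrib, sum_add_distrib, ← mul_sum,
    ← mul_sum, ← mul_sum, hq.2]
  have hlc : 0 ≤ 2 * l * c := by positivity
  nlinarith [mul_le_mul_of_nonneg_left hspread hl,
    mul_le_mul_of_nonneg_left hmean (by positivity : (0 : ℝ) ≤ 1 + 2 * l * c),
    mul_le_mul_of_nonneg_left hc₁ (by positivity : 0 ≤ 2 * l * κ)]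

theorem natCast_sum_floor_mul_le {ι : Type*} (s : Finset ι) {f : ι → ℝ} (hf : ∀ i, 0 ≤ f i)
    (k : ℕ) : ((∑ i ∈ s, ⌊f i * k⌋₊ : ℕ) : ℝ) ≤ (∑ i ∈ s, f i) * k := by
  push_cast
  rw [sum_mul]
  exact sum_le_sum fun i _ => Nat.floor_le (by positivity [hf i])

theorem exists_round_of_mem_stdSimplex {ι : Type*} [Fintype ι] [DecidableEq ι] {ξ : ι → ℝ}
    (hξ : ξ ∈ stdSimplex ℝ ι) {k : ℕ} (hk : 0 < k) :
    ∃ x ∈ stdSimplex ℝ ι, (∀ i, ∃ n ≤ k, x i = n / k) ∧ (∀ i, x i ≠ 0 → ξ i ≠ 0) ∧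
      ∀ i, ξ i - 1 / k ≤ x i := by
  obtain ⟨i₀, hi₀⟩ : ∃ i, ξ i ≠ 0 := by
    by_contra! h
    simpa [h] using hξ.2
  have hk' : (0 : ℝ) < k := Nat.cast_pos.2 hk
  set r : ι → ℕ := fun i => ⌊ξ i * k⌋₊
  set N := ∑ i ∈ univ.erase i₀, r i
  -- rounding down everywhere but at `i₀` leaves at least the mass `ξ i₀` for `i₀`
  have hN : (N : ℝ) ≤ (1 - ξ i₀) * k := by
    have hsum := hξ.2
    rw [← add_sum_erase _ _ (mem_univ i₀)] at hsum
    exact (natCast_sum_floor_mul_le _ hξ.1 k).trans_eq (by rw [← hsum, add_sub_cancel_left])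
  have hNk : N ≤ k := by exact_mod_cast hN.trans (by nlinarith [hξ.1 i₀] : _ ≤ (k : ℝ))
  set x := Function.update (fun i => (r i : ℝ) / k) i₀ (((k - N : ℕ) : ℝ) / k)
  have hx₀ : x i₀ = ((k - N : ℕ) : ℝ) / k := Function.update_self ..
  have hx : ∀ i ≠ i₀, x i = (r i : ℝ) / k := fun i hi => Function.update_of_ne hi ..
  refine ⟨x, ⟨fun i => ?_, ?_⟩, fun i => ?_, fun i hxi => ?_, fun i => ?_⟩
  · rcases eq_or_ne i i₀ with rfl | hi
    · rw [hx₀]; positivity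
    · rw [hx i hi]; positivity
  · rw [sum_update_of_mem (mem_univ i₀), sdiff_singleton_eq_erase, Nat.cast_sub hNk,
      ← sum_div, ← Nat.cast_sum]
    field_simp
    ring
  · rcases eq_or_ne i i₀ with rfl | hi
    · exact ⟨k - N, Nat.sub_le k N, hx₀⟩
    · have hξ₁ : ξ i ≤ 1 := hξ.2 ▸ single_le_sum (fun j _ => hξ.1 j) (mem_univ i)
      refine ⟨r i, ?_, hx i hi⟩
      simpa using Nat.floor_le_floor (mul_le_of_le_one_left hk'.le hξ₁)
  · rcases eq_or_ne i i₀ with rfl | hi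
    · exact hi₀
    · intro h
      simp [hx i hi, r, h] at hxi
  · rcases eq_or_ne i i₀ with rfl | hi
    · rw [hx₀, Nat.cast_sub hNk, le_div_iff₀ hk', sub_mul, one_div_mul_cancel hk'.ne']
      linarith
    · rw [hx i hi, le_div_iff₀ hk', sub_mul, div_mul_cancel₀ _ hk'.ne']
      exact (Nat.sub_one_lt_floor _).le

namespace CGame

theorem KUniform.mono {S M : Type} {k k' : ℕ} {ξ : S → M → ℝ} (hξ : KUniform k ξ)
    (hk : k ≤ k') : KUniform k' ξ := fun s a =>
  let ⟨i, j, hij, hjk, h⟩ := hξ s a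
  ⟨i, j, hij, hjk.trans hk, h⟩

theorem IsSel1.isStrat1_ml {S M : Type} [Fintype M] {G : CGame S M} {ξ : S → M → ℝ}
    (hξ : IsSel1 G ξ) : IsStrat1 G (ml ξ) :=
  fun _ s => hξ s

variable {S M : Type} [Fintype S] {G : CGame S M}

theorem IsGame.Γ₁_nonempty (hG : G.IsGame) (s : S) : (G.Γ₁ s).Nonempty := hG.1 s

theorem IsGame.Γ₂_nonempty (hG : G.IsGame) (s : S) : (G.Γ₂ s).Nonempty := hG.2.1 s

theorem IsGame.δ_nonneg (hG : G.IsGame) (s : S) (a b : M) (t : S) : 0 ≤ G.δ s a b t :=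
  hG.2.2.1 s a b t

theorem IsGame.sum_δ (hG : G.IsGame) (s : S) (a b : M) : ∑ t, G.δ s a b t = 1 := hG.2.2.2 s a b

variable [Fintype M]

theorem IsDistOn.mem_stdSimplex {A : Finset M} {x : M → ℝ} (hx : IsDistOn A x) :
    x ∈ stdSimplex ℝ M :=
  ⟨hx.1, hx.2.2⟩

theorem isDistOn_pureDist [DecidableEq M] {A : Finset M} {b : M} (hb : b ∈ A) :
    IsDistOn A (pureDist b) := by
  refine ⟨fun a => ?_, fun a ha => ?_, by simp [pureDist]⟩
  · unfold pureDist; split_ifs <;> norm_num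
  · unfold pureDist at ha
    split_ifs at ha with h
    · exact h ▸ hb
    · exact absurd rfl ha

theorem isCompact_setOf_isDistOn (A : Finset M) : IsCompact {x : M → ℝ | IsDistOn A x} := by
  have hclosed : IsClosed {x : M → ℝ | ∀ a ∉ A, x a = 0} := by
    simp only [Set.ofPred_forall]
    exact isClosed_iInter fun a => isClosed_iInter fun _ =>
      isClosed_eq (continuous_apply a) continuous_const
  convert (isCompact_stdSimplex ℝ M).inter_right hclosed using 1
  ext x
  simp only [IsDistOn, stdSimplex, Set.mem_ofPred_eq, Set.mem_inter_iff]
  constructor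
  · exact fun ⟨h₀, hA, h₁⟩ => ⟨⟨h₀, h₁⟩, fun a ha => by_contra fun h => ha (hA a h)⟩
  · exact fun ⟨⟨h₀, h₁⟩, hA⟩ => ⟨h₀, fun a h => by_contra fun ha => h (hA a ha), h₁⟩

theorem IsGame.isSel1_uniformSel [DecidableEq M] (hG : G.IsGame) : IsSel1 G (uniformSel G) := by
  intro s
  have hc : (0 : ℝ) < (G.Γ₁ s).card := Nat.cast_pos.2 (card_pos.2 (hG.Γ₁_nonempty s))
  refine ⟨fun a => ?_, fun a ha => ?_, ?_⟩
  · unfold uniformSel; split_ifs <;> positivity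
  · by_contra h
    simp [uniformSel, h] at ha
  · simp only [uniformSel]
    rw [sum_ite_mem, univ_inter, sum_const, nsmul_eq_mul]
    field_simp

theorem IsGame.kUniform_uniformSel [DecidableEq M] (hG : G.IsGame) {k : ℕ}
    (hk : Fintype.card M ≤ k) : KUniform k (uniformSel G) := by
  intro s a
  by_cases h : a ∈ G.Γ₁ s
  · refine ⟨1, (G.Γ₁ s).card, card_pos.2 (hG.Γ₁_nonempty s), (card_le_univ _).trans hk, ?_⟩
    simp [uniformSel, h]
  · have : 0 < Fintype.card M := Fintype.card_pos_iff.2 ⟨a⟩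
    exact ⟨0, 1, zero_le_one, by omega, by simp [uniformSel, h]⟩

theorem IsGame.nonempty_isDistOn_Γ₁ (hG : G.IsGame) (s : S) :
    Nonempty {x // IsDistOn (G.Γ₁ s) x} :=
  ⟨⟨_, hG.isSel1_uniformSel s⟩⟩

theorem IsGame.nonempty_strat1 (hG : G.IsGame) : Nonempty {σ // IsStrat1 G σ} :=
  ⟨⟨_, hG.isSel1_uniformSel.isStrat1_ml⟩⟩

theorem IsGame.nonempty_strat2 (hG : G.IsGame) : Nonempty {σ // IsStrat2 G σ} :=
  ⟨⟨fun _ s => pureDist (hG.Γ₂_nonempty s).choose,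
    fun _ s => isDistOn_pureDist (hG.Γ₂_nonempty s).choose_spec⟩⟩

def succDist (G : CGame S M) (s : S) (x : M → ℝ) (b : M) : S → ℝ :=
  fun t => ∑ a, x a * G.δ s a b t

def stepVal (G : CGame S M) (v : S → ℝ) (s : S) (x : M → ℝ) (b : M) : ℝ :=
  ∑ t, G.succDist s x b t * v t

noncomputable def worstVal (G : CGame S M) (v : S → ℝ) (s : S) (x : M → ℝ) : ℝ :=
  ⨅ b : G.Γ₂ s, G.stepVal v s x b

/-- The one-step value `Pre₁(v)(s)`, computed against pure moves of player 2. -/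
noncomputable def bestVal (G : CGame S M) (v : S → ℝ) (s : S) : ℝ :=
  ⨆ x : {x // IsDistOn (G.Γ₁ s) x}, G.worstVal v s x

section OneStep

variable {v w : S → ℝ} {s : S} {x : M → ℝ} {b : M}

theorem succDist_mem_stdSimplex (hG : G.IsGame) (hx : x ∈ stdSimplex ℝ M) :
    G.succDist s x b ∈ stdSimplex ℝ S := by
  refine ⟨fun t => sum_nonneg fun a _ => mul_nonneg (hx.1 a) (hG.δ_nonneg s a b t), ?_⟩
  simp only [succDist]
  rw [sum_comm]
  simp only [← mul_sum, hG.sum_δ, mul_one, hx.2]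

theorem stepVal_mono (hG : G.IsGame) (hx : x ∈ stdSimplex ℝ M) (h : ∀ t, v t ≤ w t) :
    G.stepVal v s x b ≤ G.stepVal w s x b :=
  sum_le_sum fun t _ => mul_le_mul_of_nonneg_left (h t) ((succDist_mem_stdSimplex hG hx).1 t)

theorem stepVal_le_add (hG : G.IsGame) (hx : x ∈ stdSimplex ℝ M) {c : ℝ}
    (h : ∀ t, v t ≤ w t + c) : G.stepVal v s x b ≤ G.stepVal w s x b + c :=
  (stepVal_mono hG hx h).trans_eq
    (sum_mul_add_const_of_mem_stdSimplex (succDist_mem_stdSimplex hG hx) w c)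

theorem worstVal_le_stepVal (hb : b ∈ G.Γ₂ s) : G.worstVal v s x ≤ G.stepVal v s x b :=
  ciInf_le (Finite.bddBelow_range _) (⟨b, hb⟩ : G.Γ₂ s)

theorem exists_stepVal_eq_worstVal (hG : G.IsGame) :
    ∃ b ∈ G.Γ₂ s, G.stepVal v s x b = G.worstVal v s x := by
  have : Nonempty (G.Γ₂ s) := (hG.Γ₂_nonempty s).to_subtype
  obtain ⟨⟨b, hb⟩, h⟩ := exists_eq_ciInf_of_finite (f := fun b : G.Γ₂ s => G.stepVal v s x b)
  exact ⟨b, hb, h⟩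

theorem le_worstVal (hG : G.IsGame) {c : ℝ} (h : ∀ b ∈ G.Γ₂ s, c ≤ G.stepVal v s x b) :
    c ≤ G.worstVal v s x :=
  have : Nonempty (G.Γ₂ s) := (hG.Γ₂_nonempty s).to_subtype
  le_ciInf fun b => h b b.2

theorem bddAbove_worstVal (hG : G.IsGame) (v : S → ℝ) (s : S) :
    BddAbove (Set.range fun x : {x // IsDistOn (G.Γ₁ s) x} => G.worstVal v s x) := by
  obtain ⟨C, hC⟩ := Finite.bddAbove_range v
  obtain ⟨b, hb⟩ := hG.Γ₂_nonempty s
  refine ⟨C, Set.forall_mem_range.2 fun x => (worstVal_le_stepVal hb).trans ?_⟩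
  exact sum_mul_le_of_mem_stdSimplex (succDist_mem_stdSimplex hG x.2.mem_stdSimplex)
    fun t _ => hC ⟨t, rfl⟩

theorem worstVal_le_bestVal (hG : G.IsGame) (hx : IsDistOn (G.Γ₁ s) x) :
    G.worstVal v s x ≤ G.bestVal v s :=
  le_ciSup (bddAbove_worstVal hG v s) (⟨x, hx⟩ : {x // IsDistOn (G.Γ₁ s) x})

theorem bestVal_le_add (hG : G.IsGame) {c : ℝ} (h : ∀ t, v t ≤ w t + c) :
    G.bestVal v s ≤ G.bestVal w s + c := by
  have := hG.nonempty_isDistOn_Γ₁ s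
  refine ciSup_le fun x => ?_
  obtain ⟨b, hb, hbw⟩ := exists_stepVal_eq_worstVal hG (v := w) (s := s) (x := x.1)
  calc G.worstVal v s x ≤ G.stepVal v s x b := worstVal_le_stepVal hb
    _ ≤ G.stepVal w s x b + c := stepVal_le_add hG x.2.mem_stdSimplex h
    _ ≤ G.bestVal w s + c := by rw [hbw]; linarith [worstVal_le_bestVal hG x.2 (v := w)]

theorem bestVal_nonneg (hG : G.IsGame) (hv : ∀ t, 0 ≤ v t) : 0 ≤ G.bestVal v s := by
  have hx := hG.isSel1_uniformSel s
  refine le_trans (le_worstVal hG fun b _ => ?_) (worstVal_le_bestVal hG hx)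
  exact le_sum_mul_of_mem_stdSimplex (succDist_mem_stdSimplex hG hx.mem_stdSimplex)
    fun t _ => hv t

theorem bestVal_le_one (hG : G.IsGame) (hv : ∀ t, v t ≤ 1) : G.bestVal v s ≤ 1 := by
  have := hG.nonempty_isDistOn_Γ₁ s
  obtain ⟨b, hb⟩ := hG.Γ₂_nonempty s
  exact ciSup_le fun x => (worstVal_le_stepVal hb).trans <| sum_mul_le_of_mem_stdSimplex
    (succDist_mem_stdSimplex hG x.2.mem_stdSimplex) fun t _ => hv t

theorem exists_bestVal_le_worstVal (hG : G.IsGame) (v : S → ℝ) (s : S) :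
    ∃ x, IsDistOn (G.Γ₁ s) x ∧ G.bestVal v s ≤ G.worstVal v s x := by
  have hcont (b : M) : Continuous fun x => G.stepVal v s x b := by
    unfold stepVal succDist; fun_prop
  have husc : UpperSemicontinuous (G.worstVal v s) :=
    upperSemicontinuous_ciInf (fun _ => Finite.bddBelow_range _) fun b =>
      (hcont b).upperSemicontinuous
  obtain ⟨x, hx, hmax⟩ := UpperSemicontinuousOn.exists_isMaxOn (s := {x | IsDistOn (G.Γ₁ s) x})
    ⟨_, hG.isSel1_uniformSel s⟩ (isCompact_setOf_isDistOn _) (husc.upperSemicontinuousOn _)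
  have : Nonempty {x // IsDistOn (G.Γ₁ s) x} := ⟨⟨x, hx⟩⟩
  exact ⟨x, hx, ciSup_le fun y => hmax y.2⟩

end OneStep

noncomputable def safeIter (G : CGame S M) (F : Set S) : ℕ → S → ℝ
  | 0 => fun s => if s ∈ F then 1 else 0
  | n + 1 => fun s => if s ∈ F then G.bestVal (G.safeIter F n) s else 0

noncomputable def safeLimit (G : CGame S M) (F : Set S) (s : S) : ℝ :=
  ⨅ n, G.safeIter F n s

theorem safeIter_mem_Icc (hG : G.IsGame) (F : Set S) (n : ℕ) (s : S) :
    G.safeIter F n s ∈ Set.Icc 0 1 := by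
  induction n generalizing s with
  | zero => by_cases hs : s ∈ F <;> simp [safeIter, hs]
  | succ n ih =>
    by_cases hs : s ∈ F
    · simp only [safeIter, hs, if_true]
      exact ⟨bestVal_nonneg hG fun t => (ih t).1, bestVal_le_one hG fun t => (ih t).2⟩
    · simp [safeIter, hs]

theorem safeIter_succ_le (hG : G.IsGame) (F : Set S) (n : ℕ) (s : S) :
    G.safeIter F (n + 1) s ≤ G.safeIter F n s := by
  induction n generalizing s with
  | zero =>
    by_cases hs : s ∈ F
    · simpa [safeIter, hs] using bestVal_le_one hG fun t => (safeIter_mem_Icc hG F 0 t).2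
    · simp [safeIter, hs]
  | succ n ih =>
    by_cases hs : s ∈ F
    · simp only [safeIter, hs, if_true]
      exact (bestVal_le_add hG fun t => (ih t).trans_eq (add_zero _).symm).trans_eq (add_zero _)
    · simp [safeIter, hs]

theorem tendsto_safeIter (hG : G.IsGame) (F : Set S) (s : S) :
    Tendsto (fun n => G.safeIter F n s) atTop (𝓝 (G.safeLimit F s)) :=
  tendsto_atTop_ciInf (antitone_nat_of_succ_le fun n => safeIter_succ_le hG F n s)
    ⟨0, Set.forall_mem_range.2 fun n => (safeIter_mem_Icc hG F n s).1⟩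

theorem safeLimit_le_safeIter (hG : G.IsGame) (F : Set S) (n : ℕ) (s : S) :
    G.safeLimit F s ≤ G.safeIter F n s :=
  ciInf_le ⟨0, Set.forall_mem_range.2 fun n => (safeIter_mem_Icc hG F n s).1⟩ n

theorem safeLimit_mem_Icc (hG : G.IsGame) (F : Set S) (s : S) : G.safeLimit F s ∈ Set.Icc 0 1 :=
  ⟨le_ciInf fun n => (safeIter_mem_Icc hG F n s).1,
    (safeLimit_le_safeIter hG F 0 s).trans (safeIter_mem_Icc hG F 0 s).2⟩

theorem safeLimit_eq_zero_of_not_mem (hG : G.IsGame) (F : Set S) {s : S} (hs : s ∉ F) :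
    G.safeLimit F s = 0 :=
  le_antisymm (by simpa [safeIter, hs] using safeLimit_le_safeIter hG F 0 s)
    (safeLimit_mem_Icc hG F s).1

theorem safeLimit_le_bestVal (hG : G.IsGame) (F : Set S) {s : S} (hs : s ∈ F) :
    G.safeLimit F s ≤ G.bestVal (G.safeLimit F) s := by
  refine le_of_forall_pos_le_add fun ε hε => ?_
  obtain ⟨N, hN⟩ := (eventually_all.2 fun t => (tendsto_safeIter hG F t).eventually
    (eventually_le_nhds (lt_add_of_pos_right (G.safeLimit F t) hε))).exists
  calc G.safeLimit F s ≤ G.safeIter F (N + 1) s := safeLimit_le_safeIter hG F _ s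
    _ = G.bestVal (G.safeIter F N) s := by simp [safeIter, hs]
    _ ≤ G.bestVal (G.safeLimit F) s + ε := bestVal_le_add hG hN

theorem exists_isSel1_safeLimit_le_stepVal (hG : G.IsGame) (F : Set S) :
    ∃ ξ, IsSel1 G ξ ∧ ∀ s ∈ F, ∀ b ∈ G.Γ₂ s,
      G.safeLimit F s ≤ G.stepVal (G.safeLimit F) s (ξ s) b := by
  choose ξ hξ hopt using exists_bestVal_le_worstVal hG (G.safeLimit F)
  exact ⟨ξ, hξ, fun s hs b hb => (safeLimit_le_bestVal hG F hs).trans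
    ((hopt s).trans (worstVal_le_stepVal hb))⟩

section Strategies

variable {σ₁ σ₂ : List S → S → M → ℝ}

theorem safeW_succ (F : Set S) (n : ℕ) (w : List S) (s : S) :
    G.safeW σ₁ σ₂ F (n + 1) w s = if s ∈ F then
      ∑ b, σ₂ w s b * G.stepVal (G.safeW σ₁ σ₂ F n (w ++ [s])) s (σ₁ w s) b else 0 := by
  by_cases hs : s ∈ F
  · simp only [safeW, hs, if_true, stepVal, succDist, mul_sum, sum_mul]
    rw [sum_comm]
    refine sum_congr rfl fun b _ => ?_
    rw [sum_comm]
    exact sum_congr rfl fun t _ => sum_congr rfl fun a _ => by ring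
  · simp [safeW, hs]

theorem safeW_nonneg (hG : G.IsGame) (F : Set S) (hσ₁ : IsStrat1 G σ₁)
    (hσ₂ : IsStrat2 G σ₂) (n : ℕ) (w : List S) (s : S) : 0 ≤ G.safeW σ₁ σ₂ F n w s := by
  induction n generalizing w s with
  | zero => by_cases hs : s ∈ F <;> simp [safeW, hs]
  | succ n ih =>
    rw [safeW_succ]
    split_ifs
    · exact le_sum_mul_of_mem_stdSimplex (hσ₂ w s).mem_stdSimplex fun b _ =>
        le_sum_mul_of_mem_stdSimplex (succDist_mem_stdSimplex hG (hσ₁ w s).mem_stdSimplex)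
          fun t _ => ih _ t
    · exact le_rfl

theorem prSafe_le_safeW (hG : G.IsGame) (F : Set S) (hσ₁ : IsStrat1 G σ₁)
    (hσ₂ : IsStrat2 G σ₂) (n : ℕ) (s : S) : G.prSafe σ₁ σ₂ F s ≤ G.safeW σ₁ σ₂ F n [] s :=
  ciInf_le ⟨0, Set.forall_mem_range.2 fun m => safeW_nonneg hG F hσ₁ hσ₂ m [] s⟩ n

theorem valSafeUnder_le_prSafe (hG : G.IsGame) (F : Set S) (hσ₁ : IsStrat1 G σ₁)
    (hσ₂ : IsStrat2 G σ₂) (s : S) : G.valSafeUnder σ₁ F s ≤ G.prSafe σ₁ σ₂ F s :=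
  ciInf_le ⟨0, Set.forall_mem_range.2 fun σ => le_ciInf fun m =>
    safeW_nonneg hG F hσ₁ σ.2 m [] s⟩ (⟨σ₂, hσ₂⟩ : {σ // IsStrat2 G σ})

theorem exists_isStrat2_le_worstVal (hG : G.IsGame) (σ₁ : List S → S → M → ℝ)
    (V : List S → S → ℝ) : ∃ σ₂, IsStrat2 G σ₂ ∧ ∀ w s,
      ∑ b, σ₂ w s b * G.stepVal (V w) s (σ₁ w s) b ≤ G.worstVal (V w) s (σ₁ w s) := by
  classical
  choose b hb hbV using fun w s => exists_stepVal_eq_worstVal hG (v := V w) (s := s) (x := σ₁ w s)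
  refine ⟨fun w s => pureDist (b w s), fun w s => isDistOn_pureDist (hb w s), fun w s => ?_⟩
  rw [← hbV]
  simp [pureDist]

theorem valSafeUnder_le_safeIter (hG : G.IsGame) (F : Set S) (hσ₁ : IsStrat1 G σ₁) (n : ℕ)
    (s : S) : G.valSafeUnder σ₁ F s ≤ G.safeIter F n s := by
  obtain ⟨σ₂, hσ₂, hgreedy⟩ :=
    exists_isStrat2_le_worstVal hG σ₁ fun w => G.safeIter F (n - 1 - w.length)
  have key : ∀ m w s, m + w.length = n → G.safeW σ₁ σ₂ F m w s ≤ G.safeIter F m s := by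
    intro m
    induction m with
    | zero => intro w s _; by_cases hs : s ∈ F <;> simp [safeW, safeIter, hs]
    | succ m ih =>
      intro w s hmw
      rw [safeW_succ]
      by_cases hs : s ∈ F
      · simp only [hs, if_true, safeIter]
        have hV : n - 1 - w.length = m := by omega
        calc ∑ b, σ₂ w s b * G.stepVal (G.safeW σ₁ σ₂ F m (w ++ [s])) s (σ₁ w s) b
            ≤ ∑ b, σ₂ w s b * G.stepVal (G.safeIter F m) s (σ₁ w s) b :=
              sum_le_sum fun b _ => mul_le_mul_of_nonneg_left
                (stepVal_mono hG (hσ₁ w s).mem_stdSimplex fun t =>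
                  ih (w ++ [s]) t (by simp; omega)) ((hσ₂ w s).1 b)
          _ ≤ G.worstVal (G.safeIter F m) s (σ₁ w s) := hV ▸ hgreedy w s
          _ ≤ G.bestVal (G.safeIter F m) s := worstVal_le_bestVal hG (hσ₁ w s)
      · simp [safeIter, hs]
  calc G.valSafeUnder σ₁ F s ≤ G.prSafe σ₁ σ₂ F s := valSafeUnder_le_prSafe hG F hσ₁ hσ₂ s
    _ ≤ G.safeW σ₁ σ₂ F n [] s := prSafe_le_safeW hG F hσ₁ hσ₂ n s
    _ ≤ G.safeIter F n s := key n [] s (by simp)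

theorem valSafe_le_safeLimit (hG : G.IsGame) (F : Set S) (s : S) :
    G.valSafe F s ≤ G.safeLimit F s :=
  have := hG.nonempty_strat1
  ciSup_le fun σ₁ => le_ciInf fun n => valSafeUnder_le_safeIter hG F σ₁.2 n s

theorem valSafeUnder_le_valSafe (hG : G.IsGame) (F : Set S) (hσ₁ : IsStrat1 G σ₁) (s : S) :
    G.valSafeUnder σ₁ F s ≤ G.valSafe F s :=
  le_ciSup ⟨1, Set.forall_mem_range.2 fun σ =>
    (valSafeUnder_le_safeIter hG F σ.2 0 s).trans (safeIter_mem_Icc hG F 0 s).2⟩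
    (⟨σ₁, hσ₁⟩ : {σ // IsStrat1 G σ})

theorem le_valSafeUnder_of_le_stepVal (hG : G.IsGame) (F : Set S) {ξ : S → M → ℝ}
    (hξ : IsSel1 G ξ) {u : S → ℝ} (hu₁ : ∀ t, u t ≤ 1) (hu₀ : ∀ t ∉ F, u t ≤ 0)
    (hstep : ∀ s ∈ F, ∀ b ∈ G.Γ₂ s, u s ≤ G.stepVal u s (ξ s) b) (s : S) :
    u s ≤ G.valSafeUnder (ml ξ) F s := by
  suffices key : ∀ σ₂ : {σ // IsStrat2 G σ}, ∀ n w s, u s ≤ G.safeW (ml ξ) σ₂ F n w s by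
    have := hG.nonempty_strat2
    exact le_ciInf fun σ₂ => le_ciInf fun n => key σ₂ n [] s
  intro σ₂ n
  induction n with
  | zero => intro w s; by_cases hs : s ∈ F <;> simp [safeW, hs, hu₁, hu₀]
  | succ n ih =>
    intro w s
    rw [safeW_succ]
    by_cases hs : s ∈ F
    · simp only [hs, if_true]
      exact le_sum_mul_of_mem_stdSimplex (σ₂.2 w s).mem_stdSimplex fun b hb =>
        (hstep s hs b ((σ₂.2 w s).2.1 b hb)).trans
          (stepVal_mono hG (hξ s).mem_stdSimplex fun t => ih _ t)
    · simpa [hs] using hu₀ s hs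

end Strategies

section Rounding

variable {s : S} {b : M} {x : M → ℝ}

theorem exists_mul_δ_le_succDist (hG : G.IsGame) (hx : x ∈ stdSimplex ℝ M) {t : S}
    (ht : G.succDist s x b t ≠ 0) :
    ∃ a, x a ≠ 0 ∧ G.δ s a b t ≠ 0 ∧ x a * G.δ s a b t ≤ G.succDist s x b t := by
  obtain ⟨a, -, ha⟩ := exists_ne_zero_of_sum_ne_zero ht
  exact ⟨a, left_ne_zero_of_mul ha, right_ne_zero_of_mul ha,
    single_le_sum (f := fun a => x a * G.δ s a b t)
      (fun a _ => mul_nonneg (hx.1 a) (hG.δ_nonneg s a b t)) (mem_univ a)⟩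

theorem exists_pos_le_succDist_mul_sq (hG : G.IsGame) {ξ : S → M → ℝ} (hξ : IsSel1 G ξ)
    (v : S → ℝ) :
    ∃ β > 0, ∀ y : S → M → ℝ, IsSel1 G y → (∀ s a, y s a ≠ 0 → ξ s a ≠ 0) →
      (∀ s a, ξ s a / 2 ≤ y s a) → ∀ s b t, G.succDist s (y s) b t ≠ 0 → v t ≠ v s →
        β ≤ G.succDist s (y s) b t * (v t - v s) ^ 2 := by
  obtain ⟨μ, hμ, hξμ⟩ :=
    exists_pos_forall_ne_zero_le (f := fun p : S × M => ξ p.1 p.2) fun p => (hξ p.1).1 p.2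
  obtain ⟨d, hd, hδd⟩ := exists_pos_forall_ne_zero_le
    (f := fun p : S × M × M × S => G.δ p.1 p.2.1 p.2.2.1 p.2.2.2) fun p => hG.δ_nonneg _ _ _ _
  obtain ⟨g, hg, hvg⟩ :=
    exists_pos_forall_ne_zero_le (f := fun p : S × S => |v p.1 - v p.2|) fun p => abs_nonneg _
  refine ⟨μ / 2 * d * g ^ 2, by positivity, fun y hy hsupp hhalf s b t ht hvt => ?_⟩
  obtain ⟨a, hya, hδ, hle⟩ := exists_mul_δ_le_succDist hG (hy s).mem_stdSimplex ht
  have hμa : μ / 2 ≤ y s a := by linarith [hξμ (s, a) (hsupp s a hya), hhalf s a]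
  have hda : d ≤ G.δ s a b t := hδd (s, a, b, t) hδ
  have hgt : g ^ 2 ≤ (v t - v s) ^ 2 := by
    rw [← sq_abs (v t - v s)]
    exact pow_le_pow_left₀ hg.le (hvg (t, s) (by simpa [sub_eq_zero] using hvt)) 2
  have hya₀ : 0 ≤ y s a * G.δ s a b t := mul_nonneg ((hy s).1 a) (hG.δ_nonneg s a b t)
  calc μ / 2 * d * g ^ 2 ≤ y s a * G.δ s a b t * (v t - v s) ^ 2 := by
        gcongr; linarith [(hy s).1 a]
    _ ≤ G.succDist s (y s) b t * (v t - v s) ^ 2 := by gcongr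

theorem exists_kUniform_one_sub_mul_le {ξ : S → M → ℝ} (hξ : IsSel1 G ξ) {κ : ℝ}
    (hκ : 0 < κ) : ∃ k y, IsSel1 G y ∧ KUniform k y ∧ (∀ s a, y s a ≠ 0 → ξ s a ≠ 0) ∧
      ∀ s a, (1 - κ) * ξ s a ≤ y s a := by
  classical
  obtain ⟨μ, hμ, hξμ⟩ :=
    exists_pos_forall_ne_zero_le (f := fun p : S × M => ξ p.1 p.2) fun p => (hξ p.1).1 p.2
  set k := ⌈1 / (κ * μ)⌉₊
  have hk : 0 < k := Nat.ceil_pos.2 (by positivity)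
  have hkκ : 1 / (k : ℝ) ≤ κ * μ := by
    rw [one_div_le (by positivity) (by positivity)]
    exact Nat.le_ceil _
  choose y hy hyk hsupp hlow using
    fun s => exists_round_of_mem_stdSimplex (hξ s).mem_stdSimplex hk
  refine ⟨k, y, fun s => ⟨(hy s).1, fun a ha => (hξ s).2.1 a (hsupp s a ha), (hy s).2⟩,
    fun s a => ?_, hsupp, fun s a => ?_⟩
  · obtain ⟨n, hn, h⟩ := hyk s a
    exact ⟨n, k, hn, le_rfl, h⟩
  · rcases eq_or_ne (ξ s a) 0 with h | h
    · simpa [h] using (hy s).1 a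
    · nlinarith [hξμ (s, a) h, hlow s a]

theorem perturb_le_stepVal (hG : G.IsGame) {v : S → ℝ} (hv : ∀ t, v t ∈ Set.Icc 0 1)
    {ξ : M → ℝ} (hx : x ∈ stdSimplex ℝ M) (hopt : v s ≤ G.stepVal v s ξ b)
    {κ l β : ℝ} (hκ₀ : 0 ≤ κ) (hκ₁ : κ ≤ 1) (hl : 0 ≤ l) (hround : ∀ a, (1 - κ) * ξ a ≤ x a)
    (hspread : ∀ t, G.succDist s x b t ≠ 0 → v t ≠ v s →
      β ≤ G.succDist s x b t * (v t - v s) ^ 2)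
    (hβ : κ * (1 + 2 * l) ≤ l * β) :
    perturb l (v s) ≤ G.stepVal (fun t => perturb l (v t)) s x b := by
  have hq := succDist_mem_stdSimplex hG hx (s := s) (b := b)
  by_cases hlevel : ∀ t, G.succDist s x b t ≠ 0 → v t = v s
  · exact le_sum_mul_of_mem_stdSimplex hq fun t ht => by rw [hlevel t ht]
  push Not at hlevel
  obtain ⟨t₀, ht₀, hvt₀⟩ := hlevel
  refine le_sum_mul_perturb hq (hv s).1 (hv s).2 hl hκ₀ ?_ ?_ hβ
  · have hsucc : ∀ t, (1 - κ) * G.succDist s ξ b t ≤ G.succDist s x b t := fun t => by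
      rw [succDist, mul_sum]
      exact sum_le_sum fun a _ => by
        rw [← mul_assoc]; exact mul_le_mul_of_nonneg_right (hround a) (hG.δ_nonneg s a b t)
    calc v s - κ ≤ (1 - κ) * G.stepVal v s ξ b := by nlinarith [(hv s).2]
      _ = ∑ t, (1 - κ) * G.succDist s ξ b t * v t := by
        rw [stepVal, mul_sum]; simp only [mul_assoc]
      _ ≤ G.stepVal v s x b :=
        sum_le_sum fun t _ => mul_le_mul_of_nonneg_right (hsucc t) (hv t).1
  · exact (hspread t₀ ht₀ hvt₀).trans (single_le_sum (f := fun t => G.succDist s x b t *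
      (v t - v s) ^ 2) (fun t _ => mul_nonneg (hq.1 t) (sq_nonneg _)) (mem_univ t₀))

theorem exists_kUniform_sub_le_valSafeUnder (hG : G.IsGame) (F : Set S) {ε : ℝ} (hε : 0 < ε) :
    ∃ k ξ, IsSel1 G ξ ∧ KUniform k ξ ∧
      ∀ s, G.safeLimit F s - ε ≤ G.valSafeUnder (ml ξ) F s := by
  have hv := safeLimit_mem_Icc hG F
  obtain ⟨ξ, hξ, hopt⟩ := exists_isSel1_safeLimit_le_stepVal hG F
  obtain ⟨β, hβ, hspread⟩ := exists_pos_le_succDist_mul_sq hG hξ (G.safeLimit F)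
  set l := min ε 1
  have hl : 0 < l := lt_min hε one_pos
  set κ := min (1 / 2) (l * β / 3)
  have hκ : 0 < κ := lt_min (by norm_num) (by positivity)
  have hκ₁ : κ ≤ 1 / 2 := min_le_left _ _
  obtain ⟨k, x, hx, hxk, hsupp, hround⟩ := exists_kUniform_one_sub_mul_le hξ hκ
  refine ⟨k, x, hx, hxk, fun s => ?_⟩
  have hstep : ∀ s ∈ F, ∀ b ∈ G.Γ₂ s, perturb l (G.safeLimit F s) ≤
      G.stepVal (fun t => perturb l (G.safeLimit F t)) s (x s) b := fun s hs b hb =>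
    perturb_le_stepVal hG hv (hx s).mem_stdSimplex (hopt s hs b hb) hκ.le (by linarith) hl.le
      (hround s) (hspread x hx hsupp (fun s a => by nlinarith [hround s a, (hξ s).1 a]) s b)
      (by nlinarith [min_le_right (1 / 2) (l * β / 3), min_le_right ε 1])
  calc G.safeLimit F s - ε ≤ G.safeLimit F s - l := by linarith [min_le_left ε 1]
    _ ≤ perturb l (G.safeLimit F s) := sub_le_perturb hl.le _
    _ ≤ G.valSafeUnder (ml x) F s := le_valSafeUnder_of_le_stepVal hG F hx
      (fun t => (perturb_le_self hl.le (hv t)).trans (hv t).2)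
      (fun t ht => by simpa [safeLimit_eq_zero_of_not_mem hG F ht] using
        perturb_le_self hl.le (hv t)) hstep s

end Rounding

section UniformValues

variable [DecidableEq S] [DecidableEq M]

theorem le_zk (hG : G.IsGame) (F : Set S) {k : ℕ} {ξ : S → M → ℝ} (hξ : IsSel1 G ξ)
    (hk : KUniform k ξ) (s : S) : G.valSafeUnder (ml ξ) F s ≤ G.zk F k s := by
  refine le_csSup ⟨1, ?_⟩ ⟨ξ, hξ, hk, rfl⟩
  rintro _ ⟨η, hη, -, rfl⟩
  exact (valSafeUnder_le_safeIter hG F hη.isStrat1_ml 0 s).trans (safeIter_mem_Icc hG F 0 s).2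

theorem zk_mono (hG : G.IsGame) (F : Set S) {k k' : ℕ} (hk : Fintype.card M ≤ k)
    (hkk' : k ≤ k') (s : S) : G.zk F k s ≤ G.zk F k' s :=
  csSup_le ⟨_, _, hG.isSel1_uniformSel, hG.kUniform_uniformSel hk, rfl⟩ <| by
    rintro _ ⟨ξ, hξ, hξk, rfl⟩
    exact le_zk hG F hξ (hξk.mono hkk') s

theorem zk_le_valSafe (hG : G.IsGame) (F : Set S) {k : ℕ} (hk : Fintype.card M ≤ k) (s : S) :
    G.zk F k s ≤ G.valSafe F s :=
  csSup_le ⟨_, _, hG.isSel1_uniformSel, hG.kUniform_uniformSel hk, rfl⟩ <| by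
    rintro _ ⟨ξ, hξ, -, rfl⟩
    exact valSafeUnder_le_valSafe hG F hξ.isStrat1_ml s

end UniformValues

end CGame

/-- **Monotone convergence of the `k`-uniform values to the safety value.**
For `k ≥ |Moves|`, the best `k`-uniform memoryless values `z^k` are monotone in
`k` and converge pointwise to `⟨1⟩val(Safe F)`. -/
theorem k_uniform_values_monotone_tendsto
    {S M : Type} [Fintype S] [DecidableEq S] [Fintype M] [DecidableEq M]
    (G : CGame S M) (hG : G.IsGame) (F : Set S) :
    (∀ k, Fintype.card M ≤ k → ∀ s : S, CGame.zk G F k s ≤ CGame.zk G F (k + 1) s) ∧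
    ∀ s : S, Filter.Tendsto (fun k => CGame.zk G F k s) Filter.atTop
      (nhds (CGame.valSafe G F s)) := by
  refine ⟨fun k hk s => CGame.zk_mono hG F hk k.le_succ s, fun s => tendsto_order.2 ⟨?_, ?_⟩⟩
  · intro a ha
    obtain ⟨k, ξ, hξ, hξk, hnear⟩ :=
      CGame.exists_kUniform_sub_le_valSafeUnder hG F (half_pos (sub_pos.2 ha))
    filter_upwards [eventually_ge_atTop k] with n hn
    linarith [hnear s, CGame.le_zk hG F hξ (hξk.mono hn) s, CGame.valSafe_le_safeLimit hG F s]
  · intro a ha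
    filter_upwards [eventually_ge_atTop (Fintype.card M)] with n hn
    exact (CGame.zk_le_valSafe hG F hn s).trans_lt ha
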